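/- Define θ(a,b,c) = (Δ_{x+y+z}! · Δ_{x-1}! · Δ_{y-1}! · Δ_{z-1}!)/(Δ_{y+z-1}! · Δ_{z+x-1}! · Δ_{x+y-1}!) where a = y+z, b = z+x, c = x+y. For n ≥ 1 and 1 ≤ j ≤ n, the minimum degree satisfies d(Δ_{2j}/θ(n,n,2j)) = d(Δ_{2(j-1)}/θ(n,n,2(j-1))) - 2. -/

import Mathlib

/-!
Minimum degree is additive, so `d(Δ_m) = -2m` and `d(Δ_m!) = -m(m+1)`. Substituting into the
definition of `θ`, the quadratic terms cancel and `d(θ(y+z, z+x, x+y)) = -2(x+y+z)`.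
For `θ(n,n,2j)` this gives `d(Δ_{2j}/θ(n,n,2j)) = -4j + 2(n+j) = 2(n-j)`, which drops by `2`
when `j - 1` is replaced by `j`.
-/

/-- The minimum degree of a rational function in `A`, i.e. the minimal exponent
appearing in its Laurent series expansion at `A = 0`. -/
noncomputable def d (f : RatFunc ℚ) : ℤ := (↑f : LaurentSeries ℚ).order

/-- The quantum integer `Δ_n = (-1)^n (A^{2(n+1)} - A^{-2(n+1)})/(A^2 - A^{-2})`. -/
noncomputable def Δ (n : ℕ) : RatFunc ℚ :=
  (-1) ^ n * ((RatFunc.X ^ (2 * (n : ℤ) + 2) - RatFunc.X ^ (-(2 * (n : ℤ) + 2))) /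
    (RatFunc.X ^ (2 : ℤ) - RatFunc.X ^ (-2 : ℤ)))

/-- `Δ_m! = Δ_m Δ_{m-1} ⋯ Δ_1`, with `Δ_0! = 1` (and `Δ_{-1}! = 1`, handled by
truncated subtraction). -/
noncomputable def Δfact : ℕ → RatFunc ℚ
  | 0 => 1
  | (m + 1) => Δ (m + 1) * Δfact m

/-- `θ(a,b,c) = Δ_{x+y+z}! Δ_{x-1}! Δ_{y-1}! Δ_{z-1}! / (Δ_{y+z-1}! Δ_{z+x-1}! Δ_{x+y-1}!)`
where `a = y + z`, `b = z + x`, `c = x + y`. -/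
noncomputable def θ (a b c : ℕ) : RatFunc ℚ :=
  let x := (b + c - a) / 2
  let y := (a + c - b) / 2
  let z := (a + b - c) / 2
  Δfact (x + y + z) * Δfact (x - 1) * Δfact (y - 1) * Δfact (z - 1) /
    (Δfact (y + z - 1) * Δfact (z + x - 1) * Δfact (x + y - 1))

open HahnSeries

lemma HahnSeries.orderTop_single_sub_single_of_lt {Γ R : Type*} [LinearOrder Γ] [Ring R]
    [Nontrivial R] {a b : Γ} (hab : a < b) :
    (single b (1 : R) - single a 1).orderTop = (a : WithTop Γ) := by
  have hlt : (single a (1 : R)).orderTop < (single b (1 : R)).orderTop := by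
    simpa [orderTop_single one_ne_zero] using hab
  rw [← neg_sub, orderTop_neg, orderTop_sub hlt, orderTop_single one_ne_zero]

lemma coe_ratFunc_X_zpow (k : ℤ) :
    ((RatFunc.X ^ k : RatFunc ℚ) : LaurentSeries ℚ) = single k 1 := by
  rw [map_zpow₀, RatFunc.coe_X, ← RatFunc.single_zpow]

section MinDegree

lemma d_mul {f g : RatFunc ℚ} (hf : f ≠ 0) (hg : g ≠ 0) : d (f * g) = d f + d g := by
  unfold d
  rw [map_mul]
  exact order_mul ((map_ne_zero _).mpr hf) ((map_ne_zero _).mpr hg)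

lemma d_div {f g : RatFunc ℚ} (hf : f ≠ 0) (hg : g ≠ 0) : d (f / g) = d f - d g := by
  have h := d_mul (div_ne_zero hf hg) hg
  rw [div_mul_cancel₀ _ hg] at h
  omega

lemma d_one : d 1 = 0 := by
  unfold d; rw [map_one]; exact order_one

lemma d_neg_one_pow_mul (m : ℕ) (f : RatFunc ℚ) : d ((-1) ^ m * f) = d f := by
  rcases Nat.even_or_odd m with h | h
  · rw [h.neg_one_pow, one_mul]
  · rw [h.neg_one_pow, neg_one_mul]
    unfold d; rw [map_neg]; exact order_neg

variable {k : ℤ}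

lemma orderTop_coe_X_zpow_sub_X_zpow_neg (hk : 0 < k) :
    ((RatFunc.X ^ k - RatFunc.X ^ (-k) : RatFunc ℚ) : LaurentSeries ℚ).orderTop = (-k : ℤ) := by
  rw [map_sub, coe_ratFunc_X_zpow, coe_ratFunc_X_zpow]
  exact orderTop_single_sub_single_of_lt (by omega)

lemma X_zpow_sub_X_zpow_neg_ne_zero (hk : 0 < k) :
    (RatFunc.X ^ k - RatFunc.X ^ (-k) : RatFunc ℚ) ≠ 0 := by
  intro h
  have h' := orderTop_coe_X_zpow_sub_X_zpow_neg hk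
  rw [h, map_zero, orderTop_zero] at h'
  exact WithTop.top_ne_coe h'

lemma d_X_zpow_sub_X_zpow_neg (hk : 0 < k) : d (RatFunc.X ^ k - RatFunc.X ^ (-k)) = -k := by
  have hne : ((RatFunc.X ^ k - RatFunc.X ^ (-k) : RatFunc ℚ) : LaurentSeries ℚ) ≠ 0 :=
    (map_ne_zero _).mpr (X_zpow_sub_X_zpow_neg_ne_zero hk)
  exact WithTop.coe_injective
    ((order_eq_orderTop_of_ne_zero hne).trans (orderTop_coe_X_zpow_sub_X_zpow_neg hk))

end MinDegree

lemma Δ_ne_zero (m : ℕ) : Δ m ≠ 0 :=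
  mul_ne_zero (pow_ne_zero _ (neg_ne_zero.mpr one_ne_zero))
    (div_ne_zero (X_zpow_sub_X_zpow_neg_ne_zero (by positivity))
      (X_zpow_sub_X_zpow_neg_ne_zero (by norm_num)))

lemma d_Δ (m : ℕ) : d (Δ m) = -2 * m := by
  rw [Δ, d_neg_one_pow_mul, d_div (X_zpow_sub_X_zpow_neg_ne_zero (by positivity))
      (X_zpow_sub_X_zpow_neg_ne_zero (by norm_num)),
    d_X_zpow_sub_X_zpow_neg (by positivity), d_X_zpow_sub_X_zpow_neg (by norm_num)]
  ring

lemma Δfact_ne_zero (m : ℕ) : Δfact m ≠ 0 := by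
  induction m with
  | zero => exact one_ne_zero
  | succ m ih => exact mul_ne_zero (Δ_ne_zero _) ih

lemma d_Δfact (m : ℕ) : d (Δfact m) = -(m * (m + 1)) := by
  induction m with
  | zero => simpa [Δfact] using d_one
  | succ m ih =>
    rw [Δfact, d_mul (Δ_ne_zero _) (Δfact_ne_zero _), d_Δ, ih]
    push_cast; ring

-- Also right for `m = 0`, where `Δfact (0 - 1) = Δfact 0 = 1` and `(m - 1) * m = 0` in `ℤ`.
lemma d_Δfact_sub_one (m : ℕ) : d (Δfact (m - 1)) = -((m - 1) * m) := by
  cases m with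
  | zero => simpa [Δfact] using d_one
  | succ m => rw [Nat.add_sub_cancel, d_Δfact]; push_cast; ring

lemma θ_add (x y z : ℕ) : θ (y + z) (z + x) (x + y) =
    Δfact (x + y + z) * Δfact (x - 1) * Δfact (y - 1) * Δfact (z - 1) /
      (Δfact (y + z - 1) * Δfact (z + x - 1) * Δfact (x + y - 1)) := by
  have hx : (z + x + (x + y) - (y + z)) / 2 = x := by omega
  have hy : (y + z + (x + y) - (z + x)) / 2 = y := by omega
  have hz : (y + z + (z + x) - (x + y)) / 2 = z := by omega
  simp only [θ, hx, hy, hz]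

lemma θ_add_ne_zero (x y z : ℕ) : θ (y + z) (z + x) (x + y) ≠ 0 := by
  rw [θ_add]
  simp [Δfact_ne_zero]

lemma d_θ_add (x y z : ℕ) : d (θ (y + z) (z + x) (x + y)) = -2 * (x + y + z) := by
  rw [θ_add]
  simp only [d_div, d_mul, ne_eq, mul_eq_zero, Δfact_ne_zero, or_self, not_false_eq_true,
    d_Δfact_sub_one]
  rw [d_Δfact]
  push_cast
  ring

lemma d_Δ_div_θ {n j : ℕ} (hjn : j ≤ n) : d (Δ (2 * j) / θ n n (2 * j)) = 2 * ((n : ℤ) - j) := by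
  obtain ⟨z, rfl⟩ := Nat.exists_eq_add_of_le hjn
  have hθ : θ (j + z) (j + z) (2 * j) = θ (j + z) (z + j) (j + j) := by
    rw [two_mul, add_comm z j]
  rw [hθ, d_div (Δ_ne_zero _) (θ_add_ne_zero j j z), d_Δ, d_θ_add]
  push_cast
  ring

theorem d_fusion_general (n j : ℕ) (hj : 1 ≤ j) (hjn : j ≤ n) :
    d (Δ (2 * j) / θ n n (2 * j)) = d (Δ (2 * (j - 1)) / θ n n (2 * (j - 1))) - 2 := by
  rw [d_Δ_div_θ hjn, d_Δ_div_θ (n := n) (j := j - 1) (by omega)]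
  omega

/-- For `n ≥ 1` and `1 ≤ j ≤ n`,
`d(Δ_{2j}/θ(n,n,2j)) = d(Δ_{2(j-1)}/θ(n,n,2(j-1))) - 2`. -/
theorem d_fusion (n j : ℕ) (hn : 1 ≤ n) (hj : 1 ≤ j) (hjn : j ≤ n) :
    d (Δ (2 * j) / θ n n (2 * j)) = d (Δ (2 * (j - 1)) / θ n n (2 * (j - 1))) - 2 :=
  d_fusion_general n j hj hjn
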